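/- arXiv:2408.13363 — 2 statements merged into one kernel-verified Lean document; each statement's English description precedes it below -/
import Mathlib

section
/- Let the one-dimensional heat kernel on the torus be η_t(x) = 1 + 2 Σ_{n≥1} e^{-t n²} cos(n x) (Fourier representation). Then for all t > 0 and all x, 0 ≤ η_t(x) ≤ 1 + √(π/t). -/
/-!
The integral test against the half-line Gaussian gives
`Σ_{n≥1} e^{-tn²} ≤ ∫₀^∞ e^{-ty²} dy = √(π/t)/2`, which bounds the cosine series from above.
For the lower bound, Poisson summation (Jacobi's theta transformation) rewrites
`η_t(x) = Σ_{n∈ℤ} e^{-tn²} cos(nx)` as the periodised Gaussian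
`√(π/t) Σ_{n∈ℤ} e^{-(x-2πn)²/(4t)}`, a sum of positive terms.
-/

open Real Set MeasureTheory

section HeatKernel

variable {t : ℝ}

theorem antitoneOn_exp_neg_mul_sq (ht : 0 ≤ t) :
    AntitoneOn (fun y : ℝ ↦ exp (-t * y ^ 2)) (Ici 0) :=
  fun _ hy₁ _ _ hy ↦ exp_le_exp.2 <| by
    have := pow_le_pow_left₀ (mem_Ici.1 hy₁) hy 2
    nlinarith

theorem summable_exp_neg_mul_sq_nat (ht : 0 < t) : Summable fun n : ℕ ↦ exp (-t * n ^ 2) :=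
  (antitoneOn_exp_neg_mul_sq ht.le).summable_of_integrableOn_Ioi_zero
    (integrableOn_Ioi_exp_neg_mul_sq_iff.2 ht) fun _ _ ↦ (exp_pos _).le

theorem summable_exp_neg_mul_sq_int (ht : 0 < t) : Summable fun n : ℤ ↦ exp (-t * n ^ 2) :=
  .of_nat_of_neg (by simpa using summable_exp_neg_mul_sq_nat ht)
    (by simpa using summable_exp_neg_mul_sq_nat ht)

theorem tsum_exp_neg_mul_succ_sq_le (ht : 0 < t) :
    ∑' n : ℕ, exp (-t * ((n : ℝ) + 1) ^ 2) ≤ √(π / t) / 2 := by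
  have := (antitoneOn_exp_neg_mul_sq ht.le).tsum_add_one_le_integral
    (integrableOn_Ioi_exp_neg_mul_sq_iff.2 ht) fun _ _ ↦ (exp_pos _).le
  rw [integral_gaussian_Ioi] at this
  exact_mod_cast this

theorem summable_exp_neg_mul_sq_mul_cos (ht : 0 < t) (x : ℝ) :
    Summable fun n : ℤ ↦ exp (-t * n ^ 2) * cos (n * x) :=
  (summable_exp_neg_mul_sq_int ht).of_norm_bounded fun n ↦ by
    rw [norm_mul, norm_of_nonneg (exp_pos _).le]
    exact mul_le_of_le_one_right (exp_pos _).le (abs_cos_le_one _)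

theorem tsum_int_exp_neg_mul_sq_mul_cos_eq_one_add_two_mul (ht : 0 < t) (x : ℝ) :
    ∑' n : ℤ, exp (-t * n ^ 2) * cos (n * x) =
      1 + 2 * ∑' n : ℕ, exp (-t * ((n : ℝ) + 1) ^ 2) * cos (((n : ℝ) + 1) * x) := by
  rw [tsum_int_eq_zero_add_two_mul_tsum_pnat (fun n ↦ by simp [neg_mul, cos_neg])
    (summable_exp_neg_mul_sq_mul_cos ht x), tsum_pnat_eq_tsum_succ
    (f := fun n : ℕ ↦ exp (-t * ((n : ℤ) : ℝ) ^ 2) * cos (((n : ℤ) : ℝ) * x))]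
  simp

theorem tsum_nat_exp_neg_mul_succ_sq_mul_cos_le (ht : 0 < t) (x : ℝ) :
    ∑' n : ℕ, exp (-t * ((n : ℝ) + 1) ^ 2) * cos (((n : ℝ) + 1) * x) ≤
      √(π / t) / 2 := by
  have hs := (summable_nat_add_iff 1).2 (summable_exp_neg_mul_sq_nat ht)
  have hs' := (summable_nat_add_iff 1).2
    (summable_int_iff_summable_nat_and_neg.1 (summable_exp_neg_mul_sq_mul_cos ht x)).1
  push_cast at hs hs'
  refine le_trans (Summable.tsum_le_tsum (fun n ↦ ?_) hs' hs) (tsum_exp_neg_mul_succ_sq_le ht)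
  exact mul_le_of_le_one_right (exp_pos _).le (cos_le_one _)

open Complex in
theorem tsum_exp_neg_mul_sq_mul_cos_eq_sqrt_mul_tsum_gaussian (ht : 0 < t) (x : ℝ) :
    ∑' n : ℤ, Real.exp (-t * n ^ 2) * Real.cos (n * x) =
      √(π / t) * ∑' n : ℤ, Real.exp (-(x - 2 * π * n) ^ 2 / (4 * t)) := by
  -- Jacobi's transformation with `a = t / π` and `b = I x / (2π)`.
  have ha : 0 < ((t / π : ℝ) : ℂ).re := by simpa using div_pos ht pi_pos
  have hlhs (n : ℤ) : cexp (-π * (t / π : ℝ) * n ^ 2 + 2 * π * (I * x / (2 * π)) * n) =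
      Real.exp (-t * n ^ 2) * cexp ((n * x : ℝ) * I) := by
    rw [ofReal_exp, ← Complex.exp_add]
    congr 1
    push_cast
    field_simp
  have hrhs (n : ℤ) : cexp (-π / (t / π : ℝ) * (n + I * (I * x / (2 * π))) ^ 2) =
      Real.exp (-(x - 2 * π * n) ^ 2 / (4 * t)) := by
    rw [ofReal_exp, ← mul_div_assoc, ← mul_assoc, I_mul_I]
    congr 1
    push_cast
    field_simp
    ring
  have hsqrt : 1 / ((t / π : ℝ) : ℂ) ^ (1 / 2 : ℂ) = √(π / t) := by
    rw [show (1 / 2 : ℂ) = ((1 / 2 : ℝ) : ℂ) by push_cast; rfl,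
      ← ofReal_cpow (div_pos ht pi_pos).le,
      ← Real.sqrt_eq_rpow, ← ofReal_one, ← ofReal_div, one_div, ← Real.sqrt_inv, inv_div]
  have hsum : Summable fun n : ℤ ↦ (Real.exp (-t * n ^ 2) : ℂ) * cexp ((n * x : ℝ) * I) :=
    (summable_exp_neg_mul_sq_int ht).of_norm_bounded fun n ↦ by
      rw [norm_mul, norm_exp_ofReal_mul_I, mul_one, norm_real,
        Real.norm_of_nonneg (Real.exp_pos _).le]
  have key := congrArg re (tsum_exp_neg_quadratic ha (I * x / (2 * π)))
  simp only [hlhs, hrhs, hsqrt, re_tsum hsum, re_ofReal_mul, exp_ofReal_mul_I_re] at key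
  rw [key, ← ofReal_tsum, ofReal_re]

end HeatKernel

/-- The periodic heat kernel `η_t(x) = 1 + 2 Σ_{n≥1} e^{-t n²} cos (n x)` satisfies
`0 ≤ η_t(x) ≤ 1 + √(π/t)` for all `t > 0` and all `x`. -/
theorem periodic_heat_kernel_bounds
    (η : ℝ → ℝ → ℝ)
    (hη : ∀ t x, η t x =
      1 + 2 * ∑' n : ℕ, Real.exp (-t * ((n : ℝ) + 1) ^ 2) * Real.cos (((n : ℝ) + 1) * x)) :
    ∀ t : ℝ, 0 < t → ∀ x : ℝ, 0 ≤ η t x ∧ η t x ≤ 1 + Real.sqrt (π / t) := by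
  intro t ht x
  rw [hη]
  refine ⟨?_, by linarith [tsum_nat_exp_neg_mul_succ_sq_mul_cos_le ht x]⟩
  rw [← tsum_int_exp_neg_mul_sq_mul_cos_eq_one_add_two_mul ht x,
    tsum_exp_neg_mul_sq_mul_cos_eq_sqrt_mul_tsum_gaussian ht x]
  positivity
end

section
/- (Grönwall-type inequality with singular kernel, case p = ∞) Let φ ∈ L^∞([0,T]) be nonnegative, c₁ ∈ L^∞([0,T]) nonnegative, and c₀ ∈ L^∞([0,T]) nonnegative and nondecreasing. Suppose φ(t) ≤ c₀(t) + ∫₀ᵗ ((t-s)^{-1/2} + 1) c₁(s) φ(s) ds for a.e. t ∈ [0,T]. Then there is a positive nondecreasing continuous function M : ℝ₊² → [1, ∞) depending on nothing else, such that φ(t) ≤ c₀(t)·M(‖c₁‖_{L^∞(0,t)}, t) for a.e. t ∈ [0,T]. -/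
/-!
A weighted-sup-norm (Bielecki) argument. Fix `t`, put `a = ‖c₁‖_{L^∞(0,t)}` and let
`N = ess sup_{u ∈ [0,t]} e^{-λu} φ(u)`, finite because `φ` is bounded. Inserting
`φ(u) ≤ N e^{λu}` into the integral inequality and substituting `v = s - u` bounds the integral
term at time `s` by `a N e^{λs} ∫₀^∞ k(v) e^{-λv} dv`, and the Laplace transform of
`k(v) = v^{-1/2} + 1` is `√π / √λ + 1 / λ` (two Gamma integrals). For `λ = (1 + 6a)²` this term is
at most `N e^{λs} / 2`, so `e^{-λs} φ(s) ≤ c₀(t) + N / 2` for a.e. `s ≤ t`; hence `N ≤ 2 c₀(t)` and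
`φ(t) ≤ c₀(t) (1 + e^{λt})`.
-/

open Real MeasureTheory Set

section EssSup

variable {α E : Type*} [MeasurableSpace α] {μ : Measure α} [NormedAddCommGroup E] {f : α → E}
  {C : ℝ}

lemma ae_norm_le_toReal_eLpNorm_top (hC : ∀ᵐ x ∂μ, ‖f x‖ ≤ C) :
    ∀ᵐ x ∂μ, ‖f x‖ ≤ (eLpNorm f ⊤ μ).toReal := by
  rw [eLpNorm_exponent_top]
  filter_upwards [ae_le_eLpNormEssSup (f := f) (μ := μ)] with x hx
  simpa using ENNReal.toReal_mono (eLpNormEssSup_lt_top_of_ae_bound hC).ne hx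

lemma toReal_eLpNorm_top_le (hC0 : 0 ≤ C) (hC : ∀ᵐ x ∂μ, ‖f x‖ ≤ C) :
    (eLpNorm f ⊤ μ).toReal ≤ C :=
  ENNReal.toReal_le_of_le_ofReal hC0
    (by rw [eLpNorm_exponent_top]; exact eLpNormEssSup_le_of_ae_bound hC)

lemma ae_restrict_le_toReal_eLpNorm_indicator_top {f : α → ℝ} {s : Set α}
    (hs : MeasurableSet s) (hf0 : ∀ x ∈ s, 0 ≤ f x) (hf : ∀ x ∈ s, f x ≤ C) :
    ∀ᵐ x ∂μ.restrict s, f x ≤ (eLpNorm (s.indicator f) ⊤ μ).toReal := by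
  have hbound : ∀ᵐ x ∂μ.restrict s, ‖f x‖ ≤ C := by
    filter_upwards [ae_restrict_mem hs] with x hx
    rw [Real.norm_of_nonneg (hf0 x hx)]
    exact hf x hx
  rw [eLpNorm_indicator_eq_eLpNorm_restrict hs]
  filter_upwards [ae_norm_le_toReal_eLpNorm_top hbound, ae_restrict_mem hs] with x hx hxs
  rwa [Real.norm_of_nonneg (hf0 x hxs)] at hx

end EssSup

lemma ae_le_toReal_eLpNorm_exp_neg_mul_mul_exp {φ : ℝ → ℝ} {lam t C : ℝ} (hlam : 0 ≤ lam)
    (hφ0 : ∀ u ∈ Icc 0 t, 0 ≤ φ u) (hφ : ∀ u ∈ Icc 0 t, φ u ≤ C) :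
    ∀ᵐ u ∂volume.restrict (Icc 0 t), φ u ≤
      (eLpNorm (fun u => exp (-(lam * u)) * φ u) ⊤ (volume.restrict (Icc 0 t))).toReal *
        exp (lam * u) := by
  have hbound :
      ∀ᵐ u ∂volume.restrict (Icc 0 t), ‖exp (-(lam * u)) * φ u‖ ≤ max C 0 := by
    filter_upwards [ae_restrict_mem measurableSet_Icc] with u hu
    have hexp : exp (-(lam * u)) ≤ 1 := exp_le_one_iff.2 (by nlinarith [hu.1])
    rw [Real.norm_of_nonneg (mul_nonneg (exp_pos _).le (hφ0 u hu))]
    calc exp (-(lam * u)) * φ u ≤ 1 * max C 0 :=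
          mul_le_mul hexp ((hφ u hu).trans (le_max_left _ _)) (hφ0 u hu) zero_le_one
      _ = max C 0 := one_mul _
  filter_upwards [ae_norm_le_toReal_eLpNorm_top hbound, ae_restrict_mem measurableSet_Icc]
    with u hu hmem
  rw [Real.norm_of_nonneg (mul_nonneg (exp_pos _).le (hφ0 u hmem))] at hu
  calc φ u = exp (-(lam * u)) * φ u * exp (lam * u) := by
        rw [mul_right_comm, ← exp_add, neg_add_cancel, exp_zero, one_mul]
    _ ≤ _ := by gcongr

section Convolution

lemma integral_comp_sub_mul_exp (K : ℝ → ℝ) (lam s : ℝ) :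
    ∫ u in 0..s, K (s - u) * exp (lam * u) =
      exp (lam * s) * ∫ v in 0..s, K v * exp (-(lam * v)) := by
  rw [← intervalIntegral.integral_const_mul]
  have h := intervalIntegral.integral_comp_sub_left
    (fun v => exp (lam * s) * (K v * exp (-(lam * v)))) (a := 0) (b := s) s
  rw [sub_self, sub_zero] at h
  rw [← h]
  congr 1 with u
  rw [mul_left_comm, ← exp_add]
  ring_nf

variable {K : ℝ → ℝ} {lam s : ℝ}

lemma IntervalIntegrable.comp_sub_mul_exp
    (h : IntervalIntegrable (fun v => K v * exp (-(lam * v))) volume 0 s) :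
    IntervalIntegrable (fun u => K (s - u) * exp (lam * u)) volume 0 s := by
  have h' := (h.comp_sub_left s).symm.const_mul (exp (lam * s))
  rw [sub_self, sub_zero] at h'
  refine h'.congr fun u _ => ?_
  rw [mul_left_comm, ← exp_add]
  ring_nf

lemma integral_kernel_mul_le_of_ae_le_exp {g : ℝ → ℝ} {B : ℝ} (hs : 0 ≤ s) (hB : 0 ≤ B)
    (hK : ∀ v, 0 ≤ v → 0 ≤ K v)
    (hKi : IntegrableOn (fun v => K v * exp (-(lam * v))) (Ioi 0))
    (hg0 : ∀ u ∈ Icc 0 s, 0 ≤ g u)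
    (hg : ∀ᵐ u ∂volume.restrict (Icc 0 s), g u ≤ B * exp (lam * u)) :
    ∫ u in 0..s, K (s - u) * g u ≤
      B * exp (lam * s) * ∫ v in Ioi 0, K v * exp (-(lam * v)) := by
  have hKs : IntervalIntegrable (fun v => K v * exp (-(lam * v))) volume 0 s :=
    (intervalIntegrable_iff_integrableOn_Ioc_of_le hs).2 (hKi.mono_set Ioc_subset_Ioi_self)
  have hKnonneg : ∀ u ∈ Ioc 0 s, 0 ≤ K (s - u) := fun u hu => hK _ (sub_nonneg.2 hu.2)
  calc ∫ u in 0..s, K (s - u) * g u ≤ ∫ u in 0..s, B * (K (s - u) * exp (lam * u)) := by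
        rw [intervalIntegral.integral_of_le hs, intervalIntegral.integral_of_le hs]
        refine integral_mono_of_nonneg ?_ (hKs.comp_sub_mul_exp.1.const_mul B) ?_
        · filter_upwards [ae_restrict_mem measurableSet_Ioc] with u hu
          exact mul_nonneg (hKnonneg u hu) (hg0 u (Ioc_subset_Icc_self hu))
        · filter_upwards [ae_restrict_of_ae_restrict_of_subset Ioc_subset_Icc_self hg,
            ae_restrict_mem measurableSet_Ioc] with u hu hmem
          rw [mul_left_comm]
          exact mul_le_mul_of_nonneg_left hu (hKnonneg u hmem)
    _ = B * exp (lam * s) * ∫ v in 0..s, K v * exp (-(lam * v)) := by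
        rw [intervalIntegral.integral_const_mul, integral_comp_sub_mul_exp, mul_assoc]
    _ ≤ B * exp (lam * s) * ∫ v in Ioi 0, K v * exp (-(lam * v)) := by
        gcongr
        rw [intervalIntegral.integral_of_le hs]
        refine setIntegral_mono_set hKi ?_ Ioc_subset_Ioi_self.eventuallyLE
        filter_upwards [ae_restrict_mem measurableSet_Ioi] with v hv
        exact mul_nonneg (hK v (le_of_lt hv)) (exp_pos _).le

end Convolution

theorem le_mul_one_add_exp_of_le_add_integral_kernel {K φ c₀ c₁ : ℝ → ℝ} {t a lam : ℝ}
    (ht : 0 ≤ t) (ha : 0 ≤ a) (hlam : 0 ≤ lam) (hK : ∀ v, 0 ≤ v → 0 ≤ K v)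
    (hKi : IntegrableOn (fun v => K v * exp (-(lam * v))) (Ioi 0))
    (hsmall : a * ∫ v in Ioi 0, K v * exp (-(lam * v)) ≤ 1 / 2)
    (hφ0 : ∀ u ∈ Icc 0 t, 0 ≤ φ u) (hφ : ∃ C, ∀ u ∈ Icc 0 t, φ u ≤ C)
    (hc₁0 : ∀ u ∈ Icc 0 t, 0 ≤ c₁ u)
    (hc₁ : ∀ᵐ u ∂volume.restrict (Icc 0 t), c₁ u ≤ a)
    (hc₀0 : 0 ≤ c₀ t) (hc₀ : ∀ s ∈ Icc 0 t, c₀ s ≤ c₀ t)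
    (hint : ∀ᵐ s ∂volume.restrict (Icc 0 t),
      φ s ≤ c₀ s + ∫ u in 0..s, K (s - u) * (c₁ u * φ u))
    (hint_t : φ t ≤ c₀ t + ∫ u in 0..t, K (t - u) * (c₁ u * φ u)) :
    φ t ≤ c₀ t * (1 + exp (lam * t)) := by
  obtain ⟨C, hC⟩ := hφ
  set N := (eLpNorm (fun u => exp (-(lam * u)) * φ u) ⊤ (volume.restrict (Icc 0 t))).toReal
  have hN0 : 0 ≤ N := ENNReal.toReal_nonneg
  have hφN := ae_le_toReal_eLpNorm_exp_neg_mul_mul_exp hlam hφ0 hC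
  have key : ∀ s ∈ Icc 0 t, φ s ≤ c₀ s + ∫ u in 0..s, K (s - u) * (c₁ u * φ u) →
      φ s ≤ c₀ t + N / 2 * exp (lam * s) := by
    intro s hs hφs
    have hsub : Icc 0 s ⊆ Icc 0 t := Icc_subset_Icc_right hs.2
    have hI := integral_kernel_mul_le_of_ae_le_exp (g := fun u => c₁ u * φ u) hs.1
      (mul_nonneg ha hN0) hK hKi (fun u hu => mul_nonneg (hc₁0 u (hsub hu)) (hφ0 u (hsub hu)))
      (by
        filter_upwards [ae_restrict_of_ae_restrict_of_subset hsub hc₁,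
          ae_restrict_of_ae_restrict_of_subset hsub hφN, ae_restrict_mem measurableSet_Icc]
          with u hc₁u hφu hu
        rw [mul_assoc]
        exact mul_le_mul hc₁u hφu (hφ0 u (hsub hu)) ha)
    have hhalf : a * N * exp (lam * s) * ∫ v in Ioi 0, K v * exp (-(lam * v)) ≤
        N / 2 * exp (lam * s) := by
      calc _ = (a * ∫ v in Ioi 0, K v * exp (-(lam * v))) * (N * exp (lam * s)) := by ring
        _ ≤ 1 / 2 * (N * exp (lam * s)) := by gcongr
        _ = N / 2 * exp (lam * s) := by ring
    linarith [hc₀ s hs]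
  have hN : N ≤ c₀ t + N / 2 := by
    refine toReal_eLpNorm_top_le (by positivity) ?_
    filter_upwards [hint, ae_restrict_mem measurableSet_Icc] with s hφs hs
    have hexp : exp (-(lam * s)) ≤ 1 := exp_le_one_iff.2 (by nlinarith [hs.1])
    rw [Real.norm_of_nonneg (mul_nonneg (exp_pos _).le (hφ0 s hs))]
    calc exp (-(lam * s)) * φ s ≤ exp (-(lam * s)) * (c₀ t + N / 2 * exp (lam * s)) := by
          gcongr; exact key s hs hφs
      _ = exp (-(lam * s)) * c₀ t + N / 2 := by
          rw [mul_add, mul_left_comm, ← exp_add, neg_add_cancel, exp_zero, mul_one]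
      _ ≤ c₀ t + N / 2 := by gcongr; exact mul_le_of_le_one_left hc₀0 hexp
  calc φ t ≤ c₀ t + N / 2 * exp (lam * t) := key t ⟨ht, le_rfl⟩ hint_t
    _ ≤ c₀ t + c₀ t * exp (lam * t) := by gcongr; linarith
    _ = c₀ t * (1 + exp (lam * t)) := by ring

lemma integrableOn_rpow_mul_exp_neg_mul_Ioi {s lam : ℝ} (hs : -1 < s) (hlam : 0 < lam) :
    IntegrableOn (fun v : ℝ => v ^ s * exp (-(lam * v))) (Ioi 0) := by
  refine (integrableOn_rpow_mul_exp_neg_mul_rpow hs one_pos hlam).congr_fun (fun v _ => ?_)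
    measurableSet_Ioi
  simp [rpow_one]

lemma integrableOn_rpow_neg_half_add_one_mul_exp_neg {lam : ℝ} (hlam : 0 < lam) :
    IntegrableOn (fun v : ℝ => (v ^ (-(1/2) : ℝ) + 1) * exp (-(lam * v))) (Ioi 0) := by
  have hexp : IntegrableOn (fun v : ℝ => exp (-(lam * v))) (Ioi 0) := by
    simpa only [neg_mul] using exp_neg_integrableOn_Ioi 0 hlam
  refine ((integrableOn_rpow_mul_exp_neg_mul_Ioi (s := -(1/2)) (by norm_num) hlam).add
    hexp).congr_fun (fun v _ => ?_) measurableSet_Ioi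
  simp only [Pi.add_apply]
  ring

lemma integral_rpow_neg_half_add_one_mul_exp_neg {lam : ℝ} (hlam : 0 < lam) :
    ∫ v in Ioi 0, (v ^ (-(1/2) : ℝ) + 1) * exp (-(lam * v)) = √π / √lam + 1 / lam := by
  have h₁ := integral_rpow_mul_exp_neg_mul_Ioi (a := 1/2) (by norm_num) hlam
  have h₂ := integral_rpow_mul_exp_neg_mul_Ioi (a := 1) one_pos hlam
  have hexp : IntegrableOn (fun v : ℝ => exp (-(lam * v))) (Ioi 0) := by
    simpa only [neg_mul] using exp_neg_integrableOn_Ioi 0 hlam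
  norm_num [Gamma_one, Gamma_one_half_eq] at h₁ h₂
  simp only [add_mul, one_mul]
  rw [integral_add (integrableOn_rpow_mul_exp_neg_mul_Ioi (by norm_num) hlam) hexp]
  norm_num [h₁, h₂, ← sqrt_eq_rpow, sqrt_inv]
  ring

lemma mul_sqrt_pi_div_add_one_div_le_half {a : ℝ} (ha : 0 ≤ a) :
    a * (√π / √((1 + 6 * a) ^ 2) + 1 / (1 + 6 * a) ^ 2) ≤ 1 / 2 := by
  have hb : 1 ≤ 1 + 6 * a := by linarith
  rw [sqrt_sq (by linarith)]
  have hπ : √π ≤ 2 := by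
    rw [show (2 : ℝ) = √(2 ^ 2) by rw [sqrt_sq zero_le_two]]
    exact sqrt_le_sqrt (by linarith [pi_le_four])
  have hsum : √π / (1 + 6 * a) + 1 / (1 + 6 * a) ^ 2 ≤ 3 / (1 + 6 * a) := by
    have hsq : 1 / (1 + 6 * a) ^ 2 ≤ 1 / (1 + 6 * a) := by gcongr; nlinarith
    have hpi : √π / (1 + 6 * a) ≤ 2 / (1 + 6 * a) := by gcongr
    linarith [show 2 / (1 + 6 * a) + 1 / (1 + 6 * a) = 3 / (1 + 6 * a) by ring]
  calc a * (√π / (1 + 6 * a) + 1 / (1 + 6 * a) ^ 2) ≤ a * (3 / (1 + 6 * a)) := by gcongr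
    _ ≤ 1 / 2 := by rw [mul_div_assoc', div_le_div_iff₀ (by positivity) two_pos]; linarith

/-- `λ = (1 + 6a)²` is the weight for which `mul_sqrt_pi_div_add_one_div_le_half` holds; the
`max t 0` keeps the factor monotone in `a` for negative `t` too. -/
noncomputable def gronwallFactor (a t : ℝ) : ℝ := 1 + exp ((1 + 6 * a) ^ 2 * max t 0)

lemma one_le_gronwallFactor (a t : ℝ) : 1 ≤ gronwallFactor a t :=
  le_add_of_nonneg_right (exp_pos _).le

lemma gronwallFactor_monotoneOn_left (t : ℝ) :
    MonotoneOn (fun a => gronwallFactor a t) (Ici 0) := by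
  intro a (ha : 0 ≤ a) b _ hab
  simp only [gronwallFactor]
  gcongr

lemma gronwallFactor_monotone_right (a : ℝ) : Monotone (gronwallFactor a) := by
  intro t s hts
  simp only [gronwallFactor]
  gcongr

lemma continuous_gronwallFactor : Continuous fun q : ℝ × ℝ => gronwallFactor q.1 q.2 := by
  unfold gronwallFactor
  fun_prop

/-- Grönwall-type inequality with the singular kernel `(t-s)^{-1/2} + 1`, case `p = ∞`:
if nonnegative bounded `φ` satisfies
`φ(t) ≤ c₀(t) + ∫₀ᵗ ((t-s)^{-1/2} + 1) c₁(s) φ(s) ds` for a.e. `t ∈ [0,T]`,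
with `c₁ ∈ L^∞` nonnegative and `c₀ ∈ L^∞` nonnegative nondecreasing, then
`φ(t) ≤ c₀(t) · M(‖c₁‖_{L^∞(0,t)}, t)` a.e., for a universal positive nondecreasing
continuous function `M : ℝ₊² → [1,∞)`. -/
theorem gronwall_singular_kernel_Linfty :
    ∃ M : ℝ → ℝ → ℝ,
      (∀ a t, 0 ≤ a → 0 ≤ t → 1 ≤ M a t) ∧
      (∀ t, MonotoneOn (fun a => M a t) (Ici 0)) ∧
      (∀ a, MonotoneOn (M a) (Ici 0)) ∧
      ContinuousOn (fun q : ℝ × ℝ => M q.1 q.2) (Ici 0 ×ˢ Ici 0) ∧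
      ∀ (T : ℝ) (_ : 0 < T) (φ c₀ c₁ : ℝ → ℝ),
        Measurable φ → Measurable c₀ → Measurable c₁ →
        (∀ t ∈ Icc 0 T, 0 ≤ φ t) → (∃ C, ∀ t ∈ Icc 0 T, φ t ≤ C) →
        (∀ t ∈ Icc 0 T, 0 ≤ c₁ t) → (∃ C, ∀ t ∈ Icc 0 T, c₁ t ≤ C) →
        (∀ t ∈ Icc 0 T, 0 ≤ c₀ t) → (∃ C, ∀ t ∈ Icc 0 T, c₀ t ≤ C) →
        MonotoneOn c₀ (Icc 0 T) →
        (∀ᵐ t ∂(volume.restrict (Icc 0 T)),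
          φ t ≤ c₀ t + ∫ s in (0 : ℝ)..t, ((t - s) ^ (-(1/2) : ℝ) + 1) * (c₁ s * φ s)) →
        ∀ᵐ t ∂(volume.restrict (Icc 0 T)),
          φ t ≤ c₀ t *
            M ((eLpNorm ((Icc (0 : ℝ) t).indicator c₁) ⊤ volume).toReal) t := by
  refine ⟨gronwallFactor, fun a t _ _ => one_le_gronwallFactor a t,
    gronwallFactor_monotoneOn_left, fun a => (gronwallFactor_monotone_right a).monotoneOn _,
    continuous_gronwallFactor.continuousOn, ?_⟩
  intro T _ φ c₀ c₁ _ _ _ hφ0 ⟨Cφ, hCφ⟩ hc₁0 ⟨C₁, hC₁⟩ hc₀0 _ hc₀ hint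
  filter_upwards [hint, ae_restrict_mem measurableSet_Icc] with t hint_t ht
  have hsub : Icc 0 t ⊆ Icc 0 T := Icc_subset_Icc_right ht.2
  set a := (eLpNorm ((Icc (0 : ℝ) t).indicator c₁) ⊤ volume).toReal
  have ha : 0 ≤ a := ENNReal.toReal_nonneg
  have hlam : 0 < (1 + 6 * a) ^ 2 := by positivity
  rw [gronwallFactor, max_eq_left ht.1]
  refine le_mul_one_add_exp_of_le_add_integral_kernel ht.1 ha hlam.le
    (fun v hv => add_nonneg (rpow_nonneg hv _) zero_le_one)
    (integrableOn_rpow_neg_half_add_one_mul_exp_neg hlam)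
    ?_ (fun u hu => hφ0 u (hsub hu)) ⟨Cφ, fun u hu => hCφ u (hsub hu)⟩
    (fun u hu => hc₁0 u (hsub hu)) ?_ (hc₀0 t ht) (fun s hs => hc₀ (hsub hs) ht hs.2)
    (ae_restrict_of_ae_restrict_of_subset hsub hint) hint_t
  · rw [integral_rpow_neg_half_add_one_mul_exp_neg hlam]
    exact mul_sqrt_pi_div_add_one_div_le_half ha
  · exact ae_restrict_le_toReal_eLpNorm_indicator_top measurableSet_Icc
      (fun u hu => hc₁0 u (hsub hu)) (fun u hu => hC₁ u (hsub hu))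
end
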